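/- Let f : ℝ² → ℝ² be locally Lipschitz, let Ω ⊆ ℝ² be a minimal set of the ODE x' = f(x) that is not a singleton, and let x : ℝ → ℝ² be a solution whose image is contained in Ω. Then for every y₀ ∈ Ω and every r > 0, the set of visit times {t ∈ [0, ∞) | ‖x(t) − y₀‖ < r} has infinite Lebesgue measure. -/

import Mathlib

open Set Metric MeasureTheory

abbrev Plane := EuclideanSpace ℝ (Fin 2)

/-- A solution of the ODE x' = f(x): a differentiable curve satisfying deriv x t = f (x t). -/
def IsSolution (f : Plane → Plane) (x : ℝ → Plane) : Prop :=
  Differentiable ℝ x ∧ ∀ t : ℝ, deriv x t = f (x t)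

/-- Ω is invariant: every point of Ω starts some solution staying in Ω, and every
solution starting in Ω remains in Ω. -/
def IsInvariantSet (f : Plane → Plane) (Ω : Set Plane) : Prop :=
  (∀ y ∈ Ω, ∃ x : ℝ → Plane, IsSolution f x ∧ x 0 = y ∧ Set.range x ⊆ Ω) ∧
  (∀ x : ℝ → Plane, IsSolution f x → x 0 ∈ Ω → Set.range x ⊆ Ω)

/-- Ω is a minimal set: nonempty, compact, invariant, with no proper nonempty compact
invariant subset. -/
def IsMinimalSet (f : Plane → Plane) (Ω : Set Plane) : Prop :=
  Ω.Nonempty ∧ IsCompact Ω ∧ IsInvariantSet f Ω ∧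
  ∀ Ω' : Set Plane, Ω'.Nonempty → IsCompact Ω' → IsInvariantSet f Ω' → Ω' ⊆ Ω → Ω' = Ω

/-!
The ω-limit set of a solution lying in a compact invariant set `Ω` is nonempty, compact and
contained in `Ω`; it is also invariant, because by Grönwall's inequality a solution starting
near a point of the ω-limit set shadows, over any fixed time span, the solution through that
point. Minimality forces the ω-limit set to be all of `Ω`, so the solution returns within `r / 2`
of `y₀` at arbitrarily late times. Being uniformly continuous, it then stays within `r` of `y₀`
for a fixed time `δ` after each return, and infinitely many disjoint intervals of length `δ`
have infinite measure.
-/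

open Filter NNReal Real

namespace IsSolution

variable {f : Plane → Plane} {u w : ℝ → Plane}

lemma hasDerivAt (hu : IsSolution f u) (t : ℝ) : HasDerivAt u (f (u t)) t := by
  simpa only [hu.2] using (hu.1 t).hasDerivAt

lemma of_hasDerivAt (h : ∀ t, HasDerivAt u (f (u t)) t) : IsSolution f u :=
  ⟨fun t => (h t).differentiableAt, fun t => (h t).deriv⟩

lemma comp_add_const (hu : IsSolution f u) (c : ℝ) : IsSolution f (fun t => u (t + c)) :=
  of_hasDerivAt fun t => (hu.hasDerivAt (t + c)).comp_add_const t c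

lemma comp_neg (hu : IsSolution f u) : IsSolution (-f) (fun t => u (-t)) :=
  of_hasDerivAt fun t => by
    simpa only [zero_sub, Pi.neg_apply] using (hu.hasDerivAt (0 - t)).comp_const_sub 0 t

lemma dist_le_of_nonneg {K : ℝ≥0} {s : Set Plane} (hf : LipschitzOnWith K f s)
    (hu : IsSolution f u) (hw : IsSolution f w) (hus : range u ⊆ s) (hws : range w ⊆ s)
    {t : ℝ} (ht : 0 ≤ t) : dist (u t) (w t) ≤ dist (u 0) (w 0) * exp (K * t) := by
  simpa only [sub_zero] using dist_le_of_trajectories_ODE_of_mem (v := fun _ => f)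
    (fun _ _ => hf) hu.1.continuous.continuousOn
    (fun τ _ => (hu.hasDerivAt τ).hasDerivWithinAt) (fun τ _ => hus (mem_range_self τ))
    hw.1.continuous.continuousOn
    (fun τ _ => (hw.hasDerivAt τ).hasDerivWithinAt) (fun τ _ => hws (mem_range_self τ))
    le_rfl t ⟨ht, le_rfl⟩

lemma dist_le {K : ℝ≥0} {s : Set Plane} (hf : LipschitzOnWith K f s)
    (hu : IsSolution f u) (hw : IsSolution f w) (hus : range u ⊆ s) (hws : range w ⊆ s)
    (t : ℝ) : dist (u t) (w t) ≤ dist (u 0) (w 0) * exp (K * |t|) := by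
  rcases le_total 0 t with ht | ht
  · simpa only [abs_of_nonneg ht] using dist_le_of_nonneg hf hu hw hus hws ht
  · simpa only [abs_of_nonpos ht, neg_neg, neg_zero] using
      dist_le_of_nonneg hf.neg hu.comp_neg hw.comp_neg
        ((range_comp_subset_range _ u).trans hus) ((range_comp_subset_range _ w).trans hws)
        (neg_nonneg.2 ht)

lemma uniformContinuous {s : Set Plane} (hu : IsSolution f u) (hf : ContinuousOn f s)
    (hs : IsCompact s) (hus : range u ⊆ s) : UniformContinuous u := by
  obtain ⟨C, hC⟩ := hs.exists_bound_of_continuousOn hf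
  refine (lipschitzWith_of_nnnorm_deriv_le (C := C.toNNReal) hu.1 fun t => ?_).uniformContinuous
  rw [hu.2, ← Real.toNNReal_coe (r := ‖f (u t)‖₊)]
  exact Real.toNNReal_le_toNNReal (hC _ (hus (mem_range_self t)))

end IsSolution

def omegaLimitSet {X : Type*} [TopologicalSpace X] (x : ℝ → X) : Set X :=
  {p | MapClusterPt p atTop x}

section OmegaLimitSet

variable {X : Type*} [TopologicalSpace X] {x : ℝ → X}

lemma isClosed_omegaLimitSet : IsClosed (omegaLimitSet x) :=
  isClosed_setOfPred_clusterPt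

lemma omegaLimitSet_subset_closure_range : omegaLimitSet x ⊆ closure (range x) := fun _ hp =>
  closure_mono (image_subset_range x _) ((mapClusterPt_atTop_iff_forall_mem_closure.1 hp) 0)

lemma IsCompact.omegaLimitSet_nonempty {K : Set X} (hK : IsCompact K) (hxK : range x ⊆ K) :
    (omegaLimitSet x).Nonempty :=
  let ⟨p, _, hp⟩ := hK.exists_mapClusterPt (u := x) (f := atTop)
    (tendsto_principal.2 (Eventually.of_forall fun t => hxK (mem_range_self t)))
  ⟨p, hp⟩

end OmegaLimitSet

lemma mem_omegaLimitSet_iff {X : Type*} [PseudoMetricSpace X] {x : ℝ → X} {p : X} :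
    p ∈ omegaLimitSet x ↔ ∀ ε > 0, ∃ᶠ t in atTop, dist (x t) p < ε :=
  mapClusterPt_iff_frequently.trans
    (nhds_basis_ball.forall_iff fun _ _ hst h => h.mono fun _ ht => hst ht)

lemma IsSolution.mem_omegaLimitSet {f : Plane → Plane} {K : ℝ≥0} {s : Set Plane}
    {x z : ℝ → Plane} (hz : IsSolution f z) (hf : LipschitzOnWith K f s) (hx : IsSolution f x)
    (hzs : range z ⊆ s) (hxs : range x ⊆ s) (hz₀ : z 0 ∈ omegaLimitSet x) (t : ℝ) :
    z t ∈ omegaLimitSet x := by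
  rw [mem_omegaLimitSet_iff] at hz₀ ⊢
  intro ε hε
  have hE : 0 < exp (K * |t|) := exp_pos _
  refine (tendsto_atTop_add_const_right atTop t tendsto_id).frequently
    ((hz₀ _ (div_pos hε hE)).mono fun τ hτ => ?_)
  have hshift := (hx.comp_add_const τ).dist_le hf hz
    ((range_comp_subset_range _ x).trans hxs) hzs t
  rw [zero_add, add_comm] at hshift
  calc dist (x (τ + t)) (z t) ≤ dist (x τ) (z 0) * exp (K * |t|) := hshift
    _ < ε / exp (K * |t|) * exp (K * |t|) := by gcongr
    _ = ε := div_mul_cancel₀ ε hE.ne'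

lemma IsInvariantSet.omegaLimitSet {f : Plane → Plane} {K : ℝ≥0} {Ω : Set Plane}
    {x : ℝ → Plane} (hΩ : IsInvariantSet f Ω) (hf : LipschitzOnWith K f Ω)
    (hx : IsSolution f x) (hxΩ : range x ⊆ Ω) (hωΩ : omegaLimitSet x ⊆ Ω) :
    IsInvariantSet f (omegaLimitSet x) := by
  refine ⟨fun y hy => ?_, fun z hz hz₀ => ?_⟩
  · obtain ⟨z, hz, hz₀, hzΩ⟩ := hΩ.1 y (hωΩ hy)
    refine ⟨z, hz, hz₀, range_subset_iff.2 fun t => ?_⟩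
    exact hz.mem_omegaLimitSet hf hx hzΩ hxΩ (hz₀.symm ▸ hy) t
  · exact range_subset_iff.2
      (hz.mem_omegaLimitSet hf hx (hΩ.2 z hz (hωΩ hz₀)) hxΩ hz₀)

lemma IsMinimalSet.omegaLimitSet_eq {f : Plane → Plane} {Ω : Set Plane} {x : ℝ → Plane}
    (hΩ : IsMinimalSet f Ω) (hf : LocallyLipschitz f) (hx : IsSolution f x)
    (hxΩ : range x ⊆ Ω) : omegaLimitSet x = Ω := by
  obtain ⟨-, hΩc, hΩinv, hΩmin⟩ := hΩ
  obtain ⟨K, hK⟩ := hf.locallyLipschitzOn.exists_lipschitzOnWith_of_compact hΩc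
  have hωΩ : omegaLimitSet x ⊆ Ω :=
    omegaLimitSet_subset_closure_range.trans (closure_minimal hxΩ hΩc.isClosed)
  exact hΩmin _ (hΩc.omegaLimitSet_nonempty hxΩ)
    (hΩc.of_isClosed_subset isClosed_omegaLimitSet hωΩ)
    (hΩinv.omegaLimitSet hK hx hxΩ hωΩ) hωΩ

lemma volume_eq_top_of_forall_exists_Ico_subset {S : Set ℝ} {δ : ℝ} (hδ : 0 < δ)
    (hS : ∀ T, ∃ t ≥ T, Ico t (t + δ) ⊆ S) : volume S = ⊤ := by
  have hvolume_tail : ∀ n : ℕ, ∀ T, n * ENNReal.ofReal δ ≤ volume (S ∩ Ici T) := by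
    intro n
    induction n with
    | zero => simp
    | succ n ih =>
      intro T
      obtain ⟨t, htT, ht⟩ := hS T
      have hdisj : Disjoint (S ∩ Ici (t + δ)) (Ico t (t + δ)) :=
        disjoint_left.2 fun _ h₁ h₂ => h₂.2.not_ge h₁.2
      calc ((n + 1 : ℕ) : ENNReal) * ENNReal.ofReal δ
          = n * ENNReal.ofReal δ + ENNReal.ofReal δ := by push_cast; ring
        _ ≤ volume (S ∩ Ici (t + δ)) + volume (Ico t (t + δ)) := by
          rw [volume_Ico, add_sub_cancel_left]
          gcongr
          exact ih _
        _ = volume (S ∩ Ici (t + δ) ∪ Ico t (t + δ)) :=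
          (measure_union hdisj measurableSet_Ico).symm
        _ ≤ volume (S ∩ Ici T) := measure_mono <| union_subset
          (inter_subset_inter_right _ (Ici_subset_Ici.2 (by linarith)))
          (subset_inter ht fun _ h => le_trans htT h.1)
  by_contra h
  obtain ⟨n, hn⟩ := ENNReal.exists_nat_mul_gt (ENNReal.ofReal_pos.2 hδ).ne' h
  exact (hn.trans_le ((hvolume_tail n 0).trans (measure_mono inter_subset_left))).false

theorem minimal_set_infinite_visit_time_general (f : Plane → Plane) (hf : LocallyLipschitz f)
    (Ω : Set Plane) (hΩ : IsMinimalSet f Ω)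
    (x : ℝ → Plane) (hx : IsSolution f x) (hxΩ : Set.range x ⊆ Ω) :
    ∀ y₀ ∈ Ω, ∀ r > (0 : ℝ),
      volume {t : ℝ | 0 ≤ t ∧ ‖x t - y₀‖ < r} = ⊤ := by
  intro y₀ hy₀ r hr
  have hy₀ω : y₀ ∈ omegaLimitSet x := (hΩ.omegaLimitSet_eq hf hx hxΩ).symm ▸ hy₀
  obtain ⟨δ, hδ, hxδ⟩ := Metric.uniformContinuous_iff.1
    (hx.uniformContinuous hf.continuous.continuousOn hΩ.2.1 hxΩ) (r / 2) (half_pos hr)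
  refine volume_eq_top_of_forall_exists_Ico_subset hδ fun T => ?_
  obtain ⟨t, hTt, hty⟩ :=
    frequently_atTop.1 (mem_omegaLimitSet_iff.1 hy₀ω (r / 2) (half_pos hr)) (max T 0)
  refine ⟨t, le_of_max_le_left hTt, fun s hs => ⟨(le_of_max_le_right hTt).trans hs.1, ?_⟩⟩
  have hst : dist s t < δ := by
    rw [dist_eq_norm, Real.norm_of_nonneg (sub_nonneg.2 hs.1)]
    linarith [hs.2]
  calc ‖x s - y₀‖ = dist (x s) y₀ := (dist_eq_norm _ _).symm
    _ ≤ dist (x s) (x t) + dist (x t) y₀ := dist_triangle _ _ _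
    _ < r / 2 + r / 2 := add_lt_add (hxδ hst) hty
    _ = r := add_halves r

/-- For a nontrivial minimal set, the set of times a solution spends in any ball
around a point of Ω has infinite Lebesgue measure. -/
theorem minimal_set_infinite_visit_time (f : Plane → Plane) (hf : LocallyLipschitz f)
    (Ω : Set Plane) (hΩ : IsMinimalSet f Ω) (hns : ¬ ∃ p : Plane, Ω = {p})
    (x : ℝ → Plane) (hx : IsSolution f x) (hxΩ : Set.range x ⊆ Ω) :
    ∀ y₀ ∈ Ω, ∀ r > (0 : ℝ),
      volume {t : ℝ | 0 ≤ t ∧ ‖x t - y₀‖ < r} = ⊤ :=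
  minimal_set_infinite_visit_time_general f hf Ω hΩ x hx hxΩ
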